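/- For every δ ∈ (0,1) and C > 0 there exists a constant C₁ such that for all real x, y and η > 0: ∫_{−C}^{C} dα / (|x − α − iη|^δ · |y − α − iη|^δ) ≤ C₁ / |x − y − iη|^δ. -/

import Mathlib

/-!
Write `A`, `B`, `W` for `‖x - α - iη‖`, `‖y - α - iη‖`, `‖x - y - iη‖`. Since
`x - y - iη = (x - α - iη) - (y - α)`, we have `W ≤ A + B`, so the larger of `A, B` is at least
`W / 2`, while `A ≥ |x - α|` and `B ≥ |y - α|`. Hence the integrand is at most
`(W / 2)^(-δ) (|x - α|^(-δ) + |y - α|^(-δ))`, and since `δ < 1` the integral of `|t|^(-δ)` over an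
interval of length `L` is at most `2 L^(1-δ) / (1 - δ)`, uniformly in the position of the interval.
-/

open Complex intervalIntegral

open MeasureTheory Set

section AbsRpow

variable {r : ℝ}

theorem intervalIntegrable_abs_rpow (hr : -1 < r) (a b : ℝ) :
    IntervalIntegrable (fun t : ℝ => |t| ^ r) volume a b := by
  refine intervalIntegrable_of_even (fun t => by rw [abs_neg]) (fun c hc => ?_)
  refine (intervalIntegrable_rpow' hr).congr fun t ht => ?_
  rw [uIoc_of_le hc.le] at ht
  simp only [abs_of_pos ht.1]

theorem integral_abs_rpow_le_of_nonneg (hr : -1 < r) (hr0 : r ≤ 0) {u v : ℝ} (hu : 0 ≤ u)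
    (huv : u ≤ v) : ∫ t in u..v, |t| ^ r ≤ (v - u) ^ (r + 1) / (r + 1) := by
  have hr1 : 0 < r + 1 := by linarith
  have h_abs : ∫ t in u..v, |t| ^ r = ∫ t in u..v, t ^ r :=
    integral_congr fun t ht => by
      rw [uIcc_of_le huv] at ht
      simp only [abs_of_nonneg (hu.trans ht.1)]
  rw [h_abs, integral_rpow (Or.inl hr)]
  gcongr
  have h_subadd := Real.rpow_add_le_add_rpow hu (sub_nonneg.2 huv) hr1.le (by linarith)
  rw [add_sub_cancel] at h_subadd
  linarith

theorem integral_abs_rpow_le (hr : -1 < r) (hr0 : r ≤ 0) {a b : ℝ} (hab : a ≤ b) :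
    ∫ t in a..b, |t| ^ r ≤ 2 * (b - a) ^ (r + 1) / (r + 1) := by
  have hr1 : 0 < r + 1 := by linarith
  have h_le_two : (b - a) ^ (r + 1) / (r + 1) ≤ 2 * (b - a) ^ (r + 1) / (r + 1) := by
    have := Real.rpow_nonneg (sub_nonneg.2 hab) (r + 1)
    gcongr
    linarith
  have h_refl : ∀ u v : ℝ, ∫ t in u..v, |t| ^ r = ∫ t in -v..-u, |t| ^ r := fun u v => by
    simpa only [abs_neg] using integral_comp_neg (a := u) (b := v) (fun t : ℝ => |t| ^ r)
  rcases le_total 0 a with ha | ha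
  · exact (integral_abs_rpow_le_of_nonneg hr hr0 ha hab).trans h_le_two
  rcases le_total b 0 with hb | hb
  · rw [h_refl]
    refine (integral_abs_rpow_le_of_nonneg hr hr0 (neg_nonneg.2 hb) (neg_le_neg hab)).trans ?_
    rw [neg_sub_neg]
    exact h_le_two
  · rw [← integral_add_adjacent_intervals (intervalIntegrable_abs_rpow hr a 0)
      (intervalIntegrable_abs_rpow hr 0 b), h_refl a 0, neg_zero]
    have h_left : ∫ t in (0 : ℝ)..-a, |t| ^ r ≤ (b - a) ^ (r + 1) / (r + 1) :=
      (integral_abs_rpow_le_of_nonneg hr hr0 le_rfl (neg_nonneg.2 ha)).trans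
        (by rw [sub_zero]; gcongr <;> linarith)
    have h_right : ∫ t in (0 : ℝ)..b, |t| ^ r ≤ (b - a) ^ (r + 1) / (r + 1) :=
      (integral_abs_rpow_le_of_nonneg hr hr0 le_rfl hb).trans
        (by rw [sub_zero]; gcongr; linarith)
    rw [mul_div_assoc, two_mul]
    exact add_le_add h_left h_right

theorem intervalIntegrable_abs_sub_rpow (hr : -1 < r) (x a b : ℝ) :
    IntervalIntegrable (fun α : ℝ => |x - α| ^ r) volume a b := by
  simpa using (intervalIntegrable_abs_rpow hr (x - a) (x - b)).comp_sub_left x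

theorem integral_abs_sub_rpow_le (hr : -1 < r) (hr0 : r ≤ 0) (x : ℝ) {a b : ℝ} (hab : a ≤ b) :
    ∫ α in a..b, |x - α| ^ r ≤ 2 * (b - a) ^ (r + 1) / (r + 1) := by
  rw [integral_comp_sub_left (fun t : ℝ => |t| ^ r) x]
  simpa using integral_abs_rpow_le hr hr0 (sub_le_sub_left hab x)

end AbsRpow

theorem rpow_mul_rpow_inv_le_of_le_add {δ a b A B W : ℝ} (hδ : 0 ≤ δ) (ha : 0 < a) (hb : 0 < b)
    (haA : a ≤ A) (hbB : b ≤ B) (hW : 0 < W) (hWAB : W ≤ A + B) :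
    (A ^ δ * B ^ δ)⁻¹ ≤ (W / 2) ^ (-δ) * (a ^ (-δ) + b ^ (-δ)) := by
  wlog hAB : A ≤ B generalizing a b A B
  · rw [mul_comm, add_comm]
    exact this hb ha hbB haA (by linarith) (by linarith)
  have hA : 0 < A := ha.trans_le haA
  have hB : 0 < B := hA.trans_le hAB
  rw [mul_inv, ← Real.rpow_neg hA.le, ← Real.rpow_neg hB.le]
  have hA' : A ^ (-δ) ≤ a ^ (-δ) := Real.rpow_le_rpow_of_nonpos ha haA (by linarith)
  have hB' : B ^ (-δ) ≤ (W / 2) ^ (-δ) :=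
    Real.rpow_le_rpow_of_nonpos (by positivity) (by linarith) (by linarith)
  calc A ^ (-δ) * B ^ (-δ) ≤ a ^ (-δ) * (W / 2) ^ (-δ) :=
        mul_le_mul hA' hB' (Real.rpow_nonneg hB.le _) (Real.rpow_nonneg ha.le _)
    _ ≤ (W / 2) ^ (-δ) * (a ^ (-δ) + b ^ (-δ)) := by
        rw [mul_comm]
        gcongr
        exact le_add_of_nonneg_right (Real.rpow_nonneg hb.le _)

theorem abs_sub_le_norm_sub_sub_I_mul (u v η : ℝ) : |u - v| ≤ ‖(u : ℂ) - v - I * η‖ := by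
  simpa using abs_re_le_norm ((u : ℂ) - v - I * η)

theorem norm_sub_sub_I_mul_pos {η : ℝ} (hη : 0 < η) (u v : ℝ) :
    0 < ‖(u : ℂ) - v - I * η‖ := by
  have h_im : ((u : ℂ) - v - I * η).im = -η := by simp
  have := abs_im_le_norm ((u : ℂ) - v - I * η)
  rw [h_im, abs_neg, abs_of_pos hη] at this
  exact hη.trans_le this

theorem norm_sub_sub_I_mul_le_add (x y α η : ℝ) :
    ‖(x : ℂ) - y - I * η‖ ≤ ‖(x : ℂ) - α - I * η‖ + ‖(y : ℂ) - α - I * η‖ :=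
  calc ‖(x : ℂ) - y - I * η‖ = ‖((x : ℂ) - α - I * η) - ((y - α : ℝ) : ℂ)‖ := by
        push_cast; ring_nf
    _ ≤ ‖(x : ℂ) - α - I * η‖ + |y - α| := by
        simpa only [norm_real, Real.norm_eq_abs] using
          norm_sub_le ((x : ℂ) - α - I * η) ((y - α : ℝ) : ℂ)
    _ ≤ ‖(x : ℂ) - α - I * η‖ + ‖(y : ℂ) - α - I * η‖ := by
        gcongr
        exact abs_sub_le_norm_sub_sub_I_mul y α η

theorem continuous_inv_norm_rpow_mul_norm_rpow {η : ℝ} (hη : 0 < η) (δ x y : ℝ) :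
    Continuous fun α : ℝ => (‖(x : ℂ) - α - I * η‖ ^ δ * ‖(y : ℂ) - α - I * η‖ ^ δ)⁻¹ := by
  have h_cont : ∀ u : ℝ, Continuous fun α : ℝ => ‖(u : ℂ) - α - I * η‖ := fun u => by fun_prop
  refine Continuous.inv₀ (((h_cont x).rpow_const fun α => ?_).mul
    ((h_cont y).rpow_const fun α => ?_)) fun α => ?_
  · exact Or.inl (norm_sub_sub_I_mul_pos hη x α).ne'
  · exact Or.inl (norm_sub_sub_I_mul_pos hη y α).ne'
  · exact (mul_pos (Real.rpow_pos_of_pos (norm_sub_sub_I_mul_pos hη x α) δ)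
      (Real.rpow_pos_of_pos (norm_sub_sub_I_mul_pos hη y α) δ)).ne'

-- Only almost everywhere: at `α = x` the bound reads `|0| ^ (-δ) = 0`.
theorem ae_inv_norm_rpow_mul_norm_rpow_le {δ η : ℝ} (hδ : 0 ≤ δ) (hη : 0 < η) (x y : ℝ) :
    ∀ᵐ α : ℝ, (‖(x : ℂ) - α - I * η‖ ^ δ * ‖(y : ℂ) - α - I * η‖ ^ δ)⁻¹ ≤
      (‖(x : ℂ) - y - I * η‖ / 2) ^ (-δ) * (|x - α| ^ (-δ) + |y - α| ^ (-δ)) := by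
  filter_upwards [measure_eq_zero_iff_ae_notMem.mp ((toFinite {x, y}).measure_zero volume)]
    with α hα
  simp only [mem_insert_iff, mem_singleton_iff, not_or] at hα
  exact rpow_mul_rpow_inv_le_of_le_add hδ (abs_pos.2 (sub_ne_zero.2 (Ne.symm hα.1)))
    (abs_pos.2 (sub_ne_zero.2 (Ne.symm hα.2))) (abs_sub_le_norm_sub_sub_I_mul x α η)
    (abs_sub_le_norm_sub_sub_I_mul y α η) (norm_sub_sub_I_mul_pos hη x y)
    (norm_sub_sub_I_mul_le_add x y α η)

/-- For every `δ ∈ (0,1)` and `C > 0` there is a constant `C₁` such that for all real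
`x, y` and all `η > 0`:
`∫_{−C}^{C} dα / (|x − α − iη|^δ · |y − α − iη|^δ) ≤ C₁ / |x − y − iη|^δ`. -/
theorem two_propagator_rpow_bound (δ : ℝ) (hδ0 : 0 < δ) (hδ1 : δ < 1)
    (C : ℝ) (hC : 0 < C) :
    ∃ C₁ : ℝ, ∀ x y η : ℝ, 0 < η →
      ∫ α in (-C)..C,
          (‖(x : ℂ) - α - Complex.I * η‖ ^ δ * ‖(y : ℂ) - α - Complex.I * η‖ ^ δ)⁻¹ ≤
        C₁ / ‖(x : ℂ) - y - Complex.I * η‖ ^ δ := by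
  have hr : -1 < -δ := by linarith
  have hr0 : -δ ≤ 0 := by linarith
  set K := 2 * (C - -C) ^ (-δ + 1) / (-δ + 1)
  refine ⟨2 ^ δ * (K + K), fun x y η hη => ?_⟩
  have hx := intervalIntegrable_abs_sub_rpow hr x (-C) C
  have hy := intervalIntegrable_abs_sub_rpow hr y (-C) C
  have hW := norm_sub_sub_I_mul_pos hη x y
  calc _ ≤ ∫ α in (-C)..C,
          (‖(x : ℂ) - y - I * η‖ / 2) ^ (-δ) * (|x - α| ^ (-δ) + |y - α| ^ (-δ)) :=
        integral_mono_ae (by linarith)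
          ((continuous_inv_norm_rpow_mul_norm_rpow hη δ x y).intervalIntegrable _ _)
          ((hx.add hy).const_mul _) (ae_inv_norm_rpow_mul_norm_rpow_le hδ0.le hη x y)
    _ = (‖(x : ℂ) - y - I * η‖ / 2) ^ (-δ) *
          ((∫ α in (-C)..C, |x - α| ^ (-δ)) + ∫ α in (-C)..C, |y - α| ^ (-δ)) := by
        rw [intervalIntegral.integral_const_mul, integral_add hx hy]
    _ ≤ (‖(x : ℂ) - y - I * η‖ / 2) ^ (-δ) * (K + K) := by
        gcongr
        · exact integral_abs_sub_rpow_le hr hr0 x (by linarith)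
        · exact integral_abs_sub_rpow_le hr hr0 y (by linarith)
    _ = 2 ^ δ * (K + K) / ‖(x : ℂ) - y - I * η‖ ^ δ := by
        rw [Real.div_rpow hW.le zero_le_two, Real.rpow_neg hW.le, Real.rpow_neg zero_le_two]
        field_simp
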